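/- For every dimension d ≥ 1 there is a constant c_d > 0 with the following property. Let S_R, S_B be finite sets in ℝ^d such that S = S_R ∪ S_B is in general position, and set n = min{|S_R|, |S_B|} and N = max{|S_R|, |S_B|}. For each subset V ⊆ S containing at least one red and at least one blue point and such that V (with inherited colors) is strongly separable, let supp(V) denote the support set of V. Then the number of distinct sets supp(V), over all such V, is at most c_d · n · N^d; consequently, the number of distinct values Mar(V) over all such V is also at most c_d · n · N^d. -/

import Mathlib

open scoped RealInnerProductSpace

/-- The hyperplane `{x : ⟪w, x⟫ = c}`. -/
def hplane (d : ℕ) (w : EuclideanSpace ℝ (Fin d)) (c : ℝ) :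
    Set (EuclideanSpace ℝ (Fin d)) :=
  {x | ⟪w, x⟫ = c}

/-- The margin `M_h(T) = min_{a ∈ T} dist(a, h)` of a hyperplane `h` w.r.t. a set `T`. -/
noncomputable def margin (d : ℕ) (T h : Set (EuclideanSpace ℝ (Fin d))) : ℝ :=
  sInf ((fun a => Metric.infDist a h) '' T)

/-- `(w, c)` strictly separates the red set `VR` from the blue set `VB`. -/
def StrictSep (d : ℕ) (VR VB : Set (EuclideanSpace ℝ (Fin d)))
    (w : EuclideanSpace ℝ (Fin d)) (c : ℝ) : Prop :=
  (∀ r ∈ VR, ⟪w, r⟫ < c) ∧ ∀ b ∈ VB, c < ⟪w, b⟫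

/-- A set of points of `ℝ^d` is in general position if every subset of at most `d + 1`
of its points is affinely independent. -/
def InGenPos (d : ℕ) (P : Set (EuclideanSpace ℝ (Fin d))) : Prop :=
  ∀ s : Finset (EuclideanSpace ℝ (Fin d)), ↑s ⊆ P → s.card ≤ d + 1 →
    AffineIndependent ℝ (fun x : s => (x : EuclideanSpace ℝ (Fin d)))

/-- `C` is the support set of the bichromatic dataset `(VR, VB)`: the set of points of
`V = VR ∪ VB` at distance `Mar(V)` from the maximum-margin separator of `V`. -/
def IsSupportSet (d : ℕ) (VR VB : Finset (EuclideanSpace ℝ (Fin d)))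
    (C : Set (EuclideanSpace ℝ (Fin d))) : Prop :=
  ∃ (w : EuclideanSpace ℝ (Fin d)) (c : ℝ), w ≠ 0 ∧ StrictSep d ↑VR ↑VB w c ∧
    (∀ (w' : EuclideanSpace ℝ (Fin d)) (c' : ℝ), w' ≠ 0 → StrictSep d ↑VR ↑VB w' c' →
      margin d (↑VR ∪ ↑VB) (hplane d w' c') ≤ margin d (↑VR ∪ ↑VB) (hplane d w c)) ∧
    C = {a ∈ (↑VR ∪ ↑VB : Set (EuclideanSpace ℝ (Fin d))) |
      Metric.infDist a (hplane d w c) = margin d (↑VR ∪ ↑VB) (hplane d w c)}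

/-- `m` is the separation-margin `Mar(V)` of the bichromatic dataset `(VR, VB)`:
the margin of its maximum-margin separator. -/
def IsMar (d : ℕ) (VR VB : Finset (EuclideanSpace ℝ (Fin d))) (m : ℝ) : Prop :=
  ∃ (w : EuclideanSpace ℝ (Fin d)) (c : ℝ), w ≠ 0 ∧ StrictSep d ↑VR ↑VB w c ∧
    (∀ (w' : EuclideanSpace ℝ (Fin d)) (c' : ℝ), w' ≠ 0 → StrictSep d ↑VR ↑VB w' c' →
      margin d (↑VR ∪ ↑VB) (hplane d w' c') ≤ margin d (↑VR ∪ ↑VB) (hplane d w c)) ∧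
    m = margin d (↑VR ∪ ↑VB) (hplane d w c)

/-!
Rescale the maximum-margin separator of `V` to canonical form `(v, e)`: red points satisfy
`⟪v, x⟫ - e ≤ -1`, blue points `1 ≤ ⟪v, x⟫ - e`, and `‖v‖` is minimal among such pairs. Then
`Mar(V) = ‖v‖⁻¹` and `supp(V)` is the set of points where one of the inequalities is tight.
A first-order perturbation of `(v, e)` shows that it is still the minimal canonical separator of
its coloured support set; hence the support set has points of both colours, and `Mar(V)` depends
only on the coloured support set. It therefore suffices to count pairs `(P, Q)` of red and blue
points lying on the two boundary hyperplanes of a common slab. In general position each such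
hyperplane carries at most `d` points of `S`, and any `d + 1` points of `P ∪ Q` determine the slab.
So every such `(P, Q)` contains a pair with both colours and at most `d + 1` points from which it
is recovered up to `4 ^ d` choices, and there are at most `d ^ 2 n N ^ d` pairs of that kind.
-/

open Filter Topology

section Canonical

variable {F : Type*} [NormedAddCommGroup F] [InnerProductSpace ℝ F]

def IsCanonicalSep (A B : Set F) (v : F) (e : ℝ) : Prop :=
  (∀ a ∈ A, ⟪v, a⟫ - e ≤ -1) ∧ ∀ b ∈ B, 1 ≤ ⟪v, b⟫ - e

def IsMinCanonicalSep (A B : Set F) (v : F) (e : ℝ) : Prop :=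
  IsCanonicalSep A B v e ∧ ∀ v' e', IsCanonicalSep A B v' e' → ‖v‖ ≤ ‖v'‖

noncomputable def minCanonicalNorm (A B : Set F) : ℝ :=
  sInf {t | ∃ v e, IsCanonicalSep A B v e ∧ ‖v‖ = t}

def OnSlabBoundary (A B : Set F) (v : F) (e : ℝ) : Prop :=
  (∀ a ∈ A, ⟪v, a⟫ - e = -1) ∧ ∀ b ∈ B, ⟪v, b⟫ - e = 1

noncomputable def tightPair (A B : Finset F) (v : F) (e : ℝ) : Finset F × Finset F :=
  ({a ∈ A | ⟪v, a⟫ - e = -1}, {b ∈ B | ⟪v, b⟫ - e = 1})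

def slabPairs (SR SB : Finset F) : Set (Finset F × Finset F) :=
  {p | p.1 ⊆ SR ∧ p.2 ⊆ SB ∧ p.1.Nonempty ∧ p.2.Nonempty ∧
    ∃ v e, OnSlabBoundary (↑p.1 : Set F) ↑p.2 v e}

variable {A B : Set F} {v : F} {e : ℝ}

lemma IsCanonicalSep.ne_zero (h : IsCanonicalSep A B v e) (hA : A.Nonempty) (hB : B.Nonempty) :
    v ≠ 0 := by
  rintro rfl
  obtain ⟨a, ha⟩ := hA
  obtain ⟨b, hb⟩ := hB
  have := h.1 a ha
  have := h.2 b hb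
  simp only [inner_zero_left, zero_sub] at *
  linarith

lemma IsCanonicalSep.coe_tightPair {A B : Finset F} (h : IsCanonicalSep ↑A ↑B v e) :
    (↑(tightPair A B v e).1 ∪ ↑(tightPair A B v e).2 : Set F) =
      {x ∈ (↑A ∪ ↑B : Set F) | |⟪v, x⟫ - e| = 1} := by
  ext x
  simp only [tightPair, Finset.coe_filter, Set.mem_union, Finset.mem_coe]
  constructor
  · rintro (⟨hx, hx1⟩ | ⟨hx, hx1⟩) <;> simp [hx, hx1]
  · rintro ⟨hx | hx, hx1⟩
    · have := h.1 x hx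
      exact Or.inl ⟨hx, by rw [abs_of_neg (by linarith)] at hx1; linarith⟩
    · have := h.2 x hx
      exact Or.inr ⟨hx, by rwa [abs_of_pos (by linarith)] at hx1⟩

lemma IsMinCanonicalSep.minCanonicalNorm_eq (h : IsMinCanonicalSep A B v e) :
    minCanonicalNorm A B = ‖v‖ :=
  IsLeast.csInf_eq ⟨⟨v, e, h.1, rfl⟩, by rintro _ ⟨v', e', h', rfl⟩; exact h.2 v' e' h'⟩

lemma IsMinCanonicalSep.nonempty_left (h : IsMinCanonicalSep A B v e) (hv : v ≠ 0) :
    A.Nonempty := by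
  rw [Set.nonempty_iff_ne_empty]
  rintro rfl
  have := h.2 0 (-1) ⟨by simp, fun b _ => by simp⟩
  exact hv (norm_le_zero_iff.1 (by simpa using this))

lemma IsMinCanonicalSep.nonempty_right (h : IsMinCanonicalSep A B v e) (hv : v ≠ 0) :
    B.Nonempty := by
  rw [Set.nonempty_iff_ne_empty]
  rintro rfl
  have := h.2 0 1 ⟨fun a _ => by simp, by simp⟩
  exact hv (norm_le_zero_iff.1 (by simpa using this))

lemma eventually_add_mul_sub_le {a a' k : ℝ} (ha : a ≤ k) (ha' : a = k → a' ≤ k) :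
    ∀ᶠ ε in 𝓝[>] (0 : ℝ), a + ε * (a' - a) ≤ k := by
  rcases ha.lt_or_eq with ha | rfl
  · have hcont : Continuous fun ε : ℝ => a + ε * (a' - a) := by fun_prop
    have := (hcont.continuousAt (x := 0)).eventually_lt (continuousAt_const (y := k))
      (by simpa using ha)
    exact (this.filter_mono nhdsWithin_le_nhds).mono fun _ => le_of_lt
  · filter_upwards [self_mem_nhdsWithin] with ε (hε : 0 < ε)
    nlinarith [ha' rfl]

lemma eventually_norm_add_smul_lt {x : F} (h : ⟪v, x⟫ < 0) :
    ∀ᶠ ε in 𝓝[>] (0 : ℝ), ‖v + ε • x‖ < ‖v‖ := by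
  have hcont : Continuous fun ε : ℝ => ε * ‖x‖ ^ 2 + 2 * ⟪v, x⟫ := by fun_prop
  have hneg := (hcont.continuousAt (x := 0)).eventually_lt (continuousAt_const (y := (0 : ℝ)))
    (by linarith)
  filter_upwards [hneg.filter_mono nhdsWithin_le_nhds, self_mem_nhdsWithin] with ε hε (hε0 : 0 < ε)
  have hsq : ‖v + ε • x‖ ^ 2 = ‖v‖ ^ 2 + ε * (ε * ‖x‖ ^ 2 + 2 * ⟪v, x⟫) := by
    rw [norm_add_sq_real, real_inner_smul_right, norm_smul, Real.norm_eq_abs, mul_pow, sq_abs]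
    ring
  exact (sq_lt_sq₀ (norm_nonneg _) (norm_nonneg _)).1 (by rw [hsq]; nlinarith)

theorem IsMinCanonicalSep.tight {A B : Finset F} (h : IsMinCanonicalSep ↑A ↑B v e) :
    IsMinCanonicalSep ↑(tightPair A B v e).1 ↑(tightPair A B v e).2 v e := by
  have mem_tight₁ {a} : a ∈ (tightPair A B v e).1 ↔ a ∈ A ∧ ⟪v, a⟫ - e = -1 := Finset.mem_filter
  have mem_tight₂ {b} : b ∈ (tightPair A B v e).2 ↔ b ∈ B ∧ ⟪v, b⟫ - e = 1 := Finset.mem_filter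
  refine ⟨⟨fun a ha => (mem_tight₁.1 ha).2.le, fun b hb => (mem_tight₂.1 hb).2.ge⟩,
    fun v' e' h' => ?_⟩
  by_contra! hlt
  have hinner : ⟪v, v' - v⟫ < 0 := by
    have := real_inner_le_norm v v'
    have hv : 0 < ‖v‖ := (norm_nonneg _).trans_lt hlt
    rw [inner_sub_right, real_inner_self_eq_norm_sq]
    nlinarith
  -- along the segment towards `(v', e')` the tight constraints stay satisfied by convexity,
  -- the slack ones by continuity, while `‖v‖` decreases to first order
  have hval (ε : ℝ) (x : F) : ⟪v + ε • (v' - v), x⟫ - (e + ε * (e' - e)) =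
      (⟪v, x⟫ - e) + ε * ((⟪v', x⟫ - e') - (⟪v, x⟫ - e)) := by
    rw [inner_add_left, real_inner_smul_left, inner_sub_left]
    ring
  have hcanon : ∀ᶠ ε in 𝓝[>] (0 : ℝ),
      IsCanonicalSep ↑A ↑B (v + ε • (v' - v)) (e + ε * (e' - e)) := by
    have hA := (eventually_all_finset A).2 fun a ha =>
      eventually_add_mul_sub_le (h.1.1 a ha) fun hta => h'.1 a (mem_tight₁.2 ⟨ha, hta⟩)
    have hB := (eventually_all_finset B).2 fun b hb =>
      eventually_add_mul_sub_le (a := -(⟪v, b⟫ - e)) (a' := -(⟪v', b⟫ - e')) (k := -1)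
        (by linarith [h.1.2 b hb])
        fun htb => by linarith [h'.2 b (mem_tight₂.2 ⟨hb, by linarith⟩)]
    filter_upwards [hA, hB] with ε hA hB
    refine ⟨fun a ha => ?_, fun b hb => ?_⟩
    · rw [hval]; exact hA a ha
    · rw [hval]; linarith [hB b hb]
  obtain ⟨ε, hε, hnorm⟩ := (hcanon.and (eventually_norm_add_smul_lt hinner)).exists
  exact hnorm.not_ge (h.2 _ _ hε)

lemma OnSlabBoundary.mono {A' B' : Set F} (h : OnSlabBoundary A B v e) (hA : A' ⊆ A)
    (hB : B' ⊆ B) : OnSlabBoundary A' B' v e :=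
  ⟨fun a ha => h.1 a (hA ha), fun b hb => h.2 b (hB hb)⟩

lemma OnSlabBoundary.disjoint (h : OnSlabBoundary A B v e) : Disjoint A B :=
  Set.disjoint_left.2 fun a ha hb => by linarith [h.1 a ha, h.2 a hb]

lemma OnSlabBoundary.isCanonicalSep (h : OnSlabBoundary A B v e) : IsCanonicalSep A B v e :=
  ⟨fun a ha => (h.1 a ha).le, fun b hb => (h.2 b hb).ge⟩

lemma finite_slabPairs (SR SB : Finset F) : (slabPairs SR SB).Finite :=
  (SR.powerset ×ˢ SB.powerset).finite_toSet.subset fun p hp => by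
    simp only [Finset.coe_product, Finset.coe_powerset, Set.mem_prod, Set.mem_preimage,
      Set.mem_powerset_iff, Finset.coe_subset]
    exact ⟨hp.1, hp.2.1⟩

end Canonical

section Euclidean

variable {d : ℕ}

local notation "E" => EuclideanSpace ℝ (Fin d)

lemma infDist_hplane {w : E} (hw : w ≠ 0) (c : ℝ) (x : E) :
    Metric.infDist x (hplane d w c) = |⟪w, x⟫ - c| / ‖w‖ := by
  have hw' : 0 < ‖w‖ := norm_pos_iff.2 hw
  set y := x - ((⟪w, x⟫ - c) / ‖w‖ ^ 2) • w
  have hy : y ∈ hplane d w c := by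
    change ⟪w, y⟫ = c
    simp only [y, inner_sub_right, real_inner_smul_right, real_inner_self_eq_norm_sq]
    field_simp
    ring
  apply le_antisymm
  · calc Metric.infDist x (hplane d w c) ≤ dist x y := Metric.infDist_le_dist_of_mem hy
      _ = |⟪w, x⟫ - c| / ‖w‖ := by
        rw [dist_eq_norm, sub_sub_cancel, norm_smul, Real.norm_eq_abs, abs_div,
          abs_of_pos (by positivity : 0 < ‖w‖ ^ 2)]
        field_simp
  · refine (Metric.le_infDist ⟨y, hy⟩).2 fun z (hz : ⟪w, z⟫ = c) => ?_
    rw [div_le_iff₀ hw', dist_eq_norm, mul_comm, ← hz, ← inner_sub_right]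
    exact abs_real_inner_le_norm _ _

lemma margin_le_infDist {T h : Set E} (hT : T.Finite) {x : E} (hx : x ∈ T) :
    margin d T h ≤ Metric.infDist x h :=
  csInf_le (hT.image _).bddBelow (Set.mem_image_of_mem _ hx)

lemma le_margin {T h : Set E} (hT : T.Nonempty) {b : ℝ}
    (hb : ∀ x ∈ T, b ≤ Metric.infDist x h) : b ≤ margin d T h :=
  le_csInf (hT.image _) (Set.forall_mem_image.2 hb)

lemma exists_infDist_eq_margin {T : Set E} (h : Set E) (hT : T.Finite) (hne : T.Nonempty) :
    ∃ x ∈ T, Metric.infDist x h = margin d T h :=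
  (hne.image _).csInf_mem (hT.image _)

lemma IsCanonicalSep.strictSep {A B : Set E} {v : E} {e : ℝ} (h : IsCanonicalSep A B v e) :
    StrictSep d A B v e :=
  ⟨fun a ha => by linarith [h.1 a ha], fun b hb => by linarith [h.2 b hb]⟩

lemma IsCanonicalSep.inv_norm_le_margin {A B : Set E} {v : E} {e : ℝ}
    (h : IsCanonicalSep A B v e) (hv : v ≠ 0) (hAB : (A ∪ B).Nonempty) :
    ‖v‖⁻¹ ≤ margin d (A ∪ B) (hplane d v e) := by
  refine le_margin hAB fun x hx => ?_
  rw [infDist_hplane hv, inv_eq_one_div]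
  gcongr
  rcases hx with hx | hx
  · exact le_abs.2 (Or.inr (by linarith [h.1 x hx]))
  · exact le_abs.2 (Or.inl (h.2 x hx))

lemma StrictSep.margin_pos {VR VB : Set E} {w : E} {c : ℝ} (hw : w ≠ 0)
    (hsep : StrictSep d VR VB w c) (hT : (VR ∪ VB).Finite) (hTne : (VR ∪ VB).Nonempty) :
    0 < margin d (VR ∪ VB) (hplane d w c) := by
  obtain ⟨x, hx, hxm⟩ := exists_infDist_eq_margin (hplane d w c) hT hTne
  have hne : ⟪w, x⟫ - c ≠ 0 := by
    rcases hx with hx | hx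
    · exact sub_ne_zero.2 (hsep.1 x hx).ne
    · exact sub_ne_zero.2 (hsep.2 x hx).ne'
  rw [← hxm, infDist_hplane hw]
  exact div_pos (abs_pos.2 hne) (norm_pos_iff.2 hw)

/-- Rescaling an optimal strict separator `(w, c)` by the inverse of `Mar(V) ‖w‖` gives the
minimal canonical separator. -/
theorem StrictSep.exists_isMinCanonicalSep {VR VB : Finset E} (hVR : VR.Nonempty)
    (hVB : VB.Nonempty) {w : E} {c : ℝ} (hw : w ≠ 0) (hsep : StrictSep d ↑VR ↑VB w c)
    (hopt : ∀ (w' : E) (c' : ℝ), w' ≠ 0 → StrictSep d ↑VR ↑VB w' c' →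
      margin d (↑VR ∪ ↑VB) (hplane d w' c') ≤ margin d (↑VR ∪ ↑VB) (hplane d w c)) :
    ∃ v e, IsMinCanonicalSep ↑VR ↑VB v e ∧ margin d (↑VR ∪ ↑VB) (hplane d w c) = ‖v‖⁻¹ ∧
      ∀ x ∈ (↑VR ∪ ↑VB : Set E), Metric.infDist x (hplane d w c) =
        margin d (↑VR ∪ ↑VB) (hplane d w c) * |⟪v, x⟫ - e| := by
  set T : Set E := ↑VR ∪ ↑VB
  set m := margin d T (hplane d w c)
  have hT : T.Finite := VR.finite_toSet.union VB.finite_toSet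
  have hTne : T.Nonempty := (Finset.coe_nonempty.2 hVR).inl
  have hw' : 0 < ‖w‖ := norm_pos_iff.2 hw
  have hm : 0 < m := hsep.margin_pos hw hT hTne
  set μ := m * ‖w‖ with hμdef
  have hμ : 0 < μ := mul_pos hm hw'
  have hval (x : E) : ⟪μ⁻¹ • w, x⟫ - μ⁻¹ * c = μ⁻¹ * (⟪w, x⟫ - c) := by
    rw [real_inner_smul_left]; ring
  have hdist : ∀ x ∈ T, Metric.infDist x (hplane d w c) = m * |⟪μ⁻¹ • w, x⟫ - μ⁻¹ * c| := by
    intro x _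
    rw [infDist_hplane hw, hval, abs_mul, abs_of_pos (inv_pos.2 hμ), hμdef]
    field_simp
  have hge : ∀ x ∈ T, 1 ≤ |⟪μ⁻¹ • w, x⟫ - μ⁻¹ * c| := fun x hx =>
    (le_mul_iff_one_le_right hm).1 (hdist x hx ▸ margin_le_infDist hT hx)
  have hcanon : IsCanonicalSep ↑VR ↑VB (μ⁻¹ • w) (μ⁻¹ * c) := by
    refine ⟨fun a ha => ?_, fun b hb => ?_⟩
    · have hneg : ⟪μ⁻¹ • w, a⟫ - μ⁻¹ * c < 0 := by
        rw [hval]; exact mul_neg_of_pos_of_neg (inv_pos.2 hμ) (by linarith [hsep.1 a ha])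
      linarith [abs_of_neg hneg ▸ hge a (Or.inl ha)]
    · have hpos : 0 < ⟪μ⁻¹ • w, b⟫ - μ⁻¹ * c := by
        rw [hval]; exact mul_pos (inv_pos.2 hμ) (by linarith [hsep.2 b hb])
      linarith [abs_of_pos hpos ▸ hge b (Or.inr hb)]
  have hnorm : ‖μ⁻¹ • w‖⁻¹ = m := by
    rw [norm_smul, Real.norm_eq_abs, abs_of_pos (inv_pos.2 hμ), hμdef]
    field_simp
  refine ⟨μ⁻¹ • w, μ⁻¹ * c, ⟨hcanon, fun v' e' h' => ?_⟩, hnorm.symm, hdist⟩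
  have hv' := h'.ne_zero (Finset.coe_nonempty.2 hVR) (Finset.coe_nonempty.2 hVB)
  have := (h'.inv_norm_le_margin hv' hTne).trans (hopt v' e' hv' h'.strictSep)
  rw [← hnorm] at this
  exact (inv_le_inv₀ (norm_pos_iff.2 hv') (inv_pos.1 (hnorm ▸ hm))).1 this

end Euclidean

section Counting

variable {α : Type*}

def basePairs (SR SB : Finset α) (k : ℕ) : Finset (Finset α × Finset α) :=
  {p ∈ SR.powerset ×ˢ SB.powerset | p.1.Nonempty ∧ p.2.Nonempty ∧ p.1.card + p.2.card ≤ k + 1}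

lemma pow_mul_pow_le_min_mul_max_pow {a b i j k : ℕ} (hi : 1 ≤ i) (hj : 1 ≤ j)
    (hk : i + j ≤ k + 1) : a ^ i * b ^ j ≤ min a b * max a b ^ k := by
  wlog hab : a ≤ b generalizing a b i j
  · rw [min_comm, max_comm, mul_comm]
    exact this hj hi (by omega) (by omega)
  rw [min_eq_left hab, max_eq_right hab]
  rcases Nat.eq_zero_or_pos a with rfl | ha
  · simp [Nat.pos_iff_ne_zero.1 hi]
  calc a ^ i * b ^ j = a * (a ^ (i - 1) * b ^ j) := by
        rw [← mul_assoc, ← pow_succ', Nat.sub_add_cancel hi]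
    _ ≤ a * (b ^ (i - 1) * b ^ j) := by gcongr
    _ ≤ a * b ^ k := by
        rw [← pow_add]
        exact Nat.mul_le_mul_left _ (Nat.pow_le_pow_right (ha.trans_le hab) (by omega))

lemma card_basePairs_le [DecidableEq α] (SR SB : Finset α) (k : ℕ) :
    (basePairs SR SB k).card ≤ k ^ 2 * (min SR.card SB.card * max SR.card SB.card ^ k) := by
  set I := {ij ∈ Finset.Icc 1 k ×ˢ Finset.Icc 1 k | ij.1 + ij.2 ≤ k + 1}
  have hsub : basePairs SR SB k ⊆
      I.biUnion fun ij => SR.powersetCard ij.1 ×ˢ SB.powersetCard ij.2 := by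
    intro p hp
    simp only [basePairs, Finset.mem_filter, Finset.mem_product, Finset.mem_powerset] at hp
    obtain ⟨⟨h1, h2⟩, hne1, hne2, hk⟩ := hp
    have := hne1.card_pos
    have := hne2.card_pos
    simp only [Finset.mem_biUnion, I, Finset.mem_filter, Finset.mem_product, Finset.mem_Icc,
      Finset.mem_powersetCard]
    exact ⟨(p.1.card, p.2.card), ⟨⟨⟨by omega, by omega⟩, by omega, by omega⟩, hk⟩, ⟨h1, rfl⟩,
      h2, rfl⟩
  calc (basePairs SR SB k).card
      ≤ I.card * (min SR.card SB.card * max SR.card SB.card ^ k) :=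
        (Finset.card_le_card hsub).trans <| Finset.card_biUnion_le_card_mul _ _ _ fun ij hij => by
          simp only [I, Finset.mem_filter, Finset.mem_product, Finset.mem_Icc] at hij
          rw [Finset.card_product, Finset.card_powersetCard, Finset.card_powersetCard]
          exact (Nat.mul_le_mul (Nat.choose_le_pow _ _) (Nat.choose_le_pow _ _)).trans
            (pow_mul_pow_le_min_mul_max_pow hij.1.1.1 hij.1.2.1 hij.2)
    _ ≤ k ^ 2 * (min SR.card SB.card * max SR.card SB.card ^ k) := by
        gcongr
        exact (Finset.card_filter_le _ _).trans (by simp [sq])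

lemma exists_basePair {SR SB P Q : Finset α} (hP : P ⊆ SR) (hQ : Q ⊆ SB)
    (hPne : P.Nonempty) (hQne : Q.Nonempty) {k : ℕ} (hk : 1 ≤ k) :
    ∃ q ∈ basePairs SR SB k, q.1 ⊆ P ∧ q.2 ⊆ Q ∧ (q = (P, Q) ∨ q.1.card + q.2.card = k + 1) := by
  have := hPne.card_pos
  have := hQne.card_pos
  by_cases hsmall : P.card + Q.card ≤ k + 1
  · exact ⟨(P, Q), by simp [basePairs, hP, hQ, hPne, hQne, hsmall], subset_rfl, subset_rfl,
      Or.inl rfl⟩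
  obtain ⟨P', hP'P, hP'⟩ := Finset.exists_subset_card_eq (min_le_left P.card k)
  obtain ⟨Q', hQ'Q, hQ'⟩ := Finset.exists_subset_card_eq (s := Q) (n := k + 1 - min P.card k)
    (by omega)
  refine ⟨(P', Q'), ?_, hP'P, hQ'Q, Or.inr (by simp only; omega)⟩
  simp only [basePairs, Finset.mem_filter, Finset.mem_product, Finset.mem_powerset]
  exact ⟨⟨hP'P.trans hP, hQ'Q.trans hQ⟩, Finset.card_pos.1 (by omega),
    Finset.card_pos.1 (by omega), by omega⟩

end Counting

section GeneralPosition

variable {d : ℕ}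

local notation "E" => EuclideanSpace ℝ (Fin d)

lemma InGenPos.card_le_of_inner_eq {S : Set E} (hS : InGenPos d S) {u : E} (hu : u ≠ 0)
    {t : ℝ} {A : Finset E} (hA : ↑A ⊆ S) (hAu : ∀ a ∈ A, ⟪u, a⟫ = t) : A.card ≤ d := by
  by_contra! hlt
  obtain ⟨B, hBA, hB⟩ := Finset.exists_subset_card_eq (s := A) (n := d + 1) hlt
  have hindep := hS B ((Finset.coe_subset.2 hBA).trans hA) hB.le
  have hspan := hindep.vectorSpan_eq_top_of_card_eq_finrank_add_one (by simp [hB])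
  have hle : vectorSpan ℝ (Set.range fun x : B => (x : E)) ≤ (ℝ ∙ u)ᗮ := by
    rw [vectorSpan_def, Submodule.span_le]
    rintro _ ⟨_, ⟨p, rfl⟩, _, ⟨q, rfl⟩, rfl⟩
    rw [SetLike.mem_coe, Submodule.mem_orthogonal_singleton_iff_inner_right]
    change ⟪u, (p : E) - q⟫ = 0
    rw [inner_sub_right, hAu p (hBA p.2), hAu q (hBA q.2), sub_self]
  have hu' : u ∈ (ℝ ∙ u)ᗮ := hle (hspan ▸ Submodule.mem_top)
  exact hu (inner_self_eq_zero.1 (Submodule.mem_orthogonal_singleton_iff_inner_right.1 hu'))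

lemma InGenPos.eq_of_onSlabBoundary {S : Set E} (hS : InGenPos d S) {P Q : Finset E}
    (hPQ : ↑P ∪ ↑Q ⊆ S) (hcard : P.card + Q.card = d + 1) {v₁ v₂ : E} {e₁ e₂ : ℝ}
    (h₁ : OnSlabBoundary ↑P ↑Q v₁ e₁) (h₂ : OnSlabBoundary ↑P ↑Q v₂ e₂) :
    v₁ = v₂ ∧ e₁ = e₂ := by
  have hagree : ∀ a ∈ P ∪ Q, ⟪v₁, a⟫ - e₁ = ⟪v₂, a⟫ - e₂ := by
    intro a ha
    rcases Finset.mem_union.1 ha with ha | ha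
    · rw [h₁.1 a ha, h₂.1 a ha]
    · rw [h₁.2 a ha, h₂.2 a ha]
  have hcard' : (P ∪ Q).card = d + 1 := by
    rw [Finset.card_union_of_disjoint (Finset.disjoint_coe.1 h₁.disjoint), hcard]
  have hv : v₁ = v₂ := by
    by_contra hne
    have := hS.card_le_of_inner_eq (sub_ne_zero.2 hne) (t := e₁ - e₂)
      (by rwa [Finset.coe_union]) fun a ha => by rw [inner_sub_left]; linarith [hagree a ha]
    omega
  subst hv
  obtain ⟨a, ha⟩ : (P ∪ Q).Nonempty := Finset.card_pos.1 (by omega)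
  exact ⟨rfl, by linarith [hagree a ha]⟩

/-- The `d + 1` points of `P ∪ Q` fix the slab, and each of its boundary hyperplanes carries at
most `d` points of `S`. -/
lemma ncard_slabPairs_superset_le {SR SB : Finset E} (hS : InGenPos d (↑SR ∪ ↑SB))
    {P Q : Finset E} (hcard : P.card + Q.card = d + 1) :
    {p ∈ slabPairs SR SB | P ⊆ p.1 ∧ Q ⊆ p.2}.ncard ≤ 4 ^ d := by
  rcases Set.eq_empty_or_nonempty {p ∈ slabPairs SR SB | P ⊆ p.1 ∧ Q ⊆ p.2} with h | h
  · simp [h]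
  obtain ⟨p₀, ⟨-, -, hne₁, hne₂, v₀, e₀, hslab₀⟩, hP₀, hQ₀⟩ := h
  have hv₀ := hslab₀.isCanonicalSep.ne_zero (Finset.coe_nonempty.2 hne₁)
    (Finset.coe_nonempty.2 hne₂)
  set TR : Finset E := {a ∈ SR | ⟪v₀, a⟫ = e₀ - 1}
  set TB : Finset E := {b ∈ SB | ⟪v₀, b⟫ = e₀ + 1}
  have hTR : TR.card ≤ d := hS.card_le_of_inner_eq hv₀
    (fun a ha => Or.inl (Finset.mem_filter.1 ha).1) fun a ha => (Finset.mem_filter.1 ha).2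
  have hTB : TB.card ≤ d := hS.card_le_of_inner_eq hv₀
    (fun a ha => Or.inr (Finset.mem_filter.1 ha).1) fun a ha => (Finset.mem_filter.1 ha).2
  have hsub : {p ∈ slabPairs SR SB | P ⊆ p.1 ∧ Q ⊆ p.2} ⊆ ↑(TR.powerset ×ˢ TB.powerset) := by
    rintro p ⟨⟨hpR, hpB, -, -, v, e, hslab⟩, hP, hQ⟩
    obtain ⟨rfl, rfl⟩ := hS.eq_of_onSlabBoundary
      (Set.union_subset_union (Finset.coe_subset.2 (hP.trans hpR))
        (Finset.coe_subset.2 (hQ.trans hpB))) hcard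
      (hslab.mono (Finset.coe_subset.2 hP) (Finset.coe_subset.2 hQ))
      (hslab₀.mono (Finset.coe_subset.2 hP₀) (Finset.coe_subset.2 hQ₀))
    simp only [Finset.coe_product, Finset.coe_powerset, Set.mem_prod, Set.mem_preimage,
      Set.mem_powerset_iff, Finset.coe_subset]
    exact ⟨fun a ha => Finset.mem_filter.2 ⟨hpR ha, by linarith [hslab.1 a ha]⟩,
      fun b hb => Finset.mem_filter.2 ⟨hpB hb, by linarith [hslab.2 b hb]⟩⟩
  calc _ ≤ (TR.powerset ×ˢ TB.powerset).card := by
        rw [← Set.ncard_coe_finset]; exact Set.ncard_le_ncard hsub (Finset.finite_toSet _)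
    _ = 2 ^ TR.card * 2 ^ TB.card := by rw [Finset.card_product, Finset.card_powerset,
        Finset.card_powerset]
    _ ≤ 2 ^ d * 2 ^ d := by gcongr <;> norm_num
    _ = 4 ^ d := by rw [← mul_pow]; norm_num

theorem ncard_slabPairs_le {SR SB : Finset E} (hd : 1 ≤ d) (hS : InGenPos d (↑SR ∪ ↑SB)) :
    (slabPairs SR SB).ncard ≤ d ^ 2 * 4 ^ d * min SR.card SB.card * max SR.card SB.card ^ d := by
  set fiber := fun q : Finset E × Finset E =>
    {p ∈ slabPairs SR SB | q.1 ⊆ p.1 ∧ q.2 ⊆ p.2 ∧ (p = q ∨ q.1.card + q.2.card = d + 1)}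
  have hcover : slabPairs SR SB ⊆ ⋃ q ∈ basePairs SR SB d, fiber q := by
    intro p hp
    obtain ⟨q, hq, h₁, h₂, h₃⟩ := exists_basePair hp.1 hp.2.1 hp.2.2.1 hp.2.2.2.1 hd
    exact Set.mem_iUnion₂.2 ⟨q, hq, hp, h₁, h₂, h₃.imp Eq.symm id⟩
  have hfiber : ∀ q ∈ basePairs SR SB d, (fiber q).ncard ≤ 4 ^ d := by
    intro q _
    by_cases hq : q.1.card + q.2.card = d + 1
    · exact (Set.ncard_le_ncard (t := {p ∈ slabPairs SR SB | q.1 ⊆ p.1 ∧ q.2 ⊆ p.2})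
        (fun p hp => ⟨hp.1, hp.2.1, hp.2.2.1⟩)
        ((finite_slabPairs SR SB).sep _)).trans (ncard_slabPairs_superset_le hS hq)
    · calc (fiber q).ncard ≤ ({q} : Set _).ncard :=
            Set.ncard_le_ncard (fun p hp => hp.2.2.2.resolve_right hq) (Set.finite_singleton q)
        _ ≤ 4 ^ d := by simp [Nat.one_le_pow]
  calc (slabPairs SR SB).ncard ≤ (⋃ q ∈ basePairs SR SB d, fiber q).ncard :=
        Set.ncard_le_ncard hcover <| (finite_slabPairs SR SB).subset <|
          Set.iUnion₂_subset fun q _ => Set.sep_subset _ _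
    _ ≤ ∑ q ∈ basePairs SR SB d, (fiber q).ncard := Finset.set_ncard_biUnion_le _ _
    _ ≤ (basePairs SR SB d).card * 4 ^ d := Finset.sum_le_card_nsmul _ _ _ hfiber
    _ ≤ d ^ 2 * 4 ^ d * min SR.card SB.card * max SR.card SB.card ^ d := by
        have := card_basePairs_le SR SB d
        calc _ ≤ d ^ 2 * (min SR.card SB.card * max SR.card SB.card ^ d) * 4 ^ d := by gcongr
          _ = _ := by ring

end GeneralPosition

section Support

variable {d : ℕ}

local notation "E" => EuclideanSpace ℝ (Fin d)

theorem exists_slabPairs_of_optimal {SR SB VR VB : Finset E} (hVR : VR ⊆ SR) (hVB : VB ⊆ SB)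
    (hVRne : VR.Nonempty) (hVBne : VB.Nonempty) {w : E} {c : ℝ} (hw : w ≠ 0)
    (hsep : StrictSep d ↑VR ↑VB w c)
    (hopt : ∀ (w' : E) (c' : ℝ), w' ≠ 0 → StrictSep d ↑VR ↑VB w' c' →
      margin d (↑VR ∪ ↑VB) (hplane d w' c') ≤ margin d (↑VR ∪ ↑VB) (hplane d w c)) :
    ∃ p ∈ slabPairs SR SB,
      {a ∈ (↑VR ∪ ↑VB : Set E) |
        Metric.infDist a (hplane d w c) = margin d (↑VR ∪ ↑VB) (hplane d w c)} = ↑p.1 ∪ ↑p.2 ∧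
      margin d (↑VR ∪ ↑VB) (hplane d w c) = (minCanonicalNorm (↑p.1 : Set E) ↑p.2)⁻¹ := by
  obtain ⟨v, e, hmin, hm, hdist⟩ := hsep.exists_isMinCanonicalSep hVRne hVBne hw hopt
  have hv := hmin.1.ne_zero (Finset.coe_nonempty.2 hVRne) (Finset.coe_nonempty.2 hVBne)
  have htight := hmin.tight
  refine ⟨tightPair VR VB v e, ⟨(Finset.filter_subset _ _).trans hVR,
    (Finset.filter_subset _ _).trans hVB, Finset.coe_nonempty.1 (htight.nonempty_left hv),
    Finset.coe_nonempty.1 (htight.nonempty_right hv), v, e,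
    fun a ha => (Finset.mem_filter.1 ha).2, fun b hb => (Finset.mem_filter.1 hb).2⟩, ?_, ?_⟩
  · rw [hmin.1.coe_tightPair]
    refine Set.ext fun a => and_congr_right fun ha => ?_
    rw [hdist a ha, mul_eq_left₀ (by rw [hm]; exact (inv_pos.2 (norm_pos_iff.2 hv)).ne')]
  · rw [htight.minCanonicalNorm_eq, hm]

end Support

/-- For every `d ≥ 1` there is `c_d > 0` such that: if `S = S_R ∪ S_B`
is in general position, `n = min(|S_R|, |S_B|)` and `N = max(|S_R|, |S_B|)`, then the
number of distinct support sets `supp(V)`, over all strongly separable `V ⊆ S` having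
both colors, is at most `c_d · n · N^d`; consequently so is the number of distinct
values `Mar(V)`. -/
theorem stmt_11 (d : ℕ) (hd : 1 ≤ d) :
    ∃ cd : ℝ, 0 < cd ∧
      ∀ SR SB : Finset (EuclideanSpace ℝ (Fin d)),
        InGenPos d (↑SR ∪ ↑SB) →
        ({C : Set (EuclideanSpace ℝ (Fin d)) |
            ∃ VR ⊆ SR, ∃ VB ⊆ SB, VR.Nonempty ∧ VB.Nonempty ∧
              IsSupportSet d VR VB C}.ncard : ℝ) ≤
          cd * (min SR.card SB.card : ℕ) * ((max SR.card SB.card : ℕ) : ℝ) ^ d ∧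
        ({m : ℝ | ∃ VR ⊆ SR, ∃ VB ⊆ SB, VR.Nonempty ∧ VB.Nonempty ∧
              IsMar d VR VB m}.ncard : ℝ) ≤
          cd * (min SR.card SB.card : ℕ) * ((max SR.card SB.card : ℕ) : ℝ) ^ d := by
  refine ⟨(d : ℝ) ^ 2 * 4 ^ d, by positivity, fun SR SB hS => ?_⟩
  have hbound {β : Type} (f : _ × _ → β) (s : Set β) (hs : s ⊆ f '' slabPairs SR SB) :
      (s.ncard : ℝ) ≤ (d : ℝ) ^ 2 * 4 ^ d * (min SR.card SB.card : ℕ) *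
        ((max SR.card SB.card : ℕ) : ℝ) ^ d := by
    have hfin := finite_slabPairs SR SB
    exact_mod_cast ((Set.ncard_le_ncard hs (hfin.image f)).trans
      (Set.ncard_image_le hfin)).trans (ncard_slabPairs_le hd hS)
  refine ⟨hbound (fun p => (↑p.1 ∪ ↑p.2 : Set (EuclideanSpace ℝ (Fin d)))) _ ?_,
    hbound (fun p => (minCanonicalNorm (↑p.1 : Set (EuclideanSpace ℝ (Fin d))) ↑p.2)⁻¹) _ ?_⟩
  · rintro C ⟨VR, hVR, VB, hVB, hVRne, hVBne, w, c, hw, hsep, hopt, rfl⟩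
    obtain ⟨p, hp, hC, -⟩ := exists_slabPairs_of_optimal hVR hVB hVRne hVBne hw hsep hopt
    exact ⟨p, hp, hC.symm⟩
  · rintro m ⟨VR, hVR, VB, hVB, hVRne, hVBne, w, c, hw, hsep, hopt, rfl⟩
    obtain ⟨p, hp, -, hm⟩ := exists_slabPairs_of_optimal hVR hVB hVRne hVBne hw hsep hopt
    exact ⟨p, hp, hm.symm⟩
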